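/- Suppose that, for each t = 1, …, T, the function f_t is M_t-relatively Lipschitz continuous and μ_t-relatively strongly convex w.r.t. the prox-function h, and d : E → ℝ is M_d-relatively Lipschitz continuous and 1-relatively strongly convex w.r.t. h with d(x) ≥ 0 for all x ∈ Q and A² = sup_{x ∈ Q} d(x) < ∞. Run regularized online mirror descent with coefficients λ_t = ½·(√((μ_{1:t} + λ_{1:t−1})² + 8·M_t²/(A² + 2·M_d²)) − (μ_{1:t} + λ_{1:t−1})) and step sizes η_{t+1} = 1/(μ_{1:t} + λ_{1:t}), where μ_{1:t} + λ_{1:t} > 0 for all t. Then Regret_T ≤ λ_{1:T}·A² + Σ_{t=1}^T (M_t + λ_t·M_d)²/(μ_{1:t} + λ_{1:t}). -/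

import Mathlib

open scoped RealInnerProductSpace
open Finset

/-!
Round `t` is a mirror-descent step on the regularized loss `f_t + λ_t d` with step size `1/S_t`,
`S_t = μ_{1:t} + λ_{1:t}`. The first-order optimality of the Bregman projection, through the
three-point identity, bounds `⟪∇f_t(x_t) + λ_t ∇d(x_t), x_{t+1} - x*⟫` by
`S_t (V(x*,x_t) - V(x*,x_{t+1}) - V(x_{t+1},x_t))`. Relative Lipschitz continuity and AM-GM
absorb `⟪·, x_t - x_{t+1}⟫` into `-S_t V(x_{t+1},x_t)`, relative strong convexity of `f_t` and `d`
contributes `-(μ_t + λ_t) V(x*,x_t)`, and `d ≤ A²` pays for the regularizer. As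
`S_t - μ_t - λ_t = S_{t-1}`, the Bregman terms telescope.
-/

noncomputable def breg {E : Type*} [NormedAddCommGroup E] [InnerProductSpace ℝ E]
    [CompleteSpace E] (h : E → ℝ) (y x : E) : ℝ :=
  h y - h x - ⟪gradient h x, y - x⟫

noncomputable def RelLipschitz {E : Type*} [NormedAddCommGroup E] [InnerProductSpace ℝ E]
    [CompleteSpace E] (h : E → ℝ) (Q : Set E) (M : ℝ) (f : E → ℝ) : Prop :=
  ∀ x ∈ Q, ∀ y ∈ Q, 0 ≤ ⟪gradient f x, y - x⟫ + M * Real.sqrt (2 * breg h y x)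

noncomputable def RelStrongConvex {E : Type*} [NormedAddCommGroup E] [InnerProductSpace ℝ E]
    [CompleteSpace E] (h : E → ℝ) (Q : Set E) (μ : ℝ) (f : E → ℝ) : Prop :=
  ∀ x ∈ Q, ∀ y ∈ Q, f y + ⟪gradient f y, x - y⟫ + μ * breg h x y ≤ f x

noncomputable def MDStepV {E : Type*} [NormedAddCommGroup E] [InnerProductSpace ℝ E]
    [CompleteSpace E] (h : E → ℝ) (Q : Set E) (η : ℝ) (v : E) (x x' : E) : Prop :=
  ∃ y : E, gradient h y = gradient h x - η • v ∧ x' ∈ Q ∧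
    IsMinOn (fun z => breg h z y) Q x'

theorem mul_sqrt_two_mul_le (c : ℝ) {S W : ℝ} (hS : 0 < S) (hW : 0 ≤ W) :
    c * √(2 * W) ≤ c ^ 2 / (2 * S) + S * W := by
  have hsq : √(2 * W) ^ 2 = 2 * W := Real.sq_sqrt (by linarith)
  rw [div_add' _ _ _ (by positivity), le_div_iff₀ (by positivity)]
  linear_combination sq_nonneg (c - S * √(2 * W)) + S ^ 2 * hsq

theorem half_sqrt_sq_add_sub_nonneg (a : ℝ) {b : ℝ} (hb : 0 ≤ b) :
    0 ≤ (√(a ^ 2 + b) - a) / 2 :=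
  div_nonneg (sub_nonneg.2 <| (le_abs_self a).trans <| Real.abs_le_sqrt <| by linarith) two_pos.le

theorem Finset.sum_Icc_pred_sub (G : ℕ → ℝ) (n : ℕ) :
    ∑ t ∈ Icc 1 n, (G (t - 1) - G t) = G 0 - G n := by
  induction n with
  | zero => simp
  | succ k ih => rw [sum_Icc_succ_top (by omega), ih, Nat.add_sub_cancel]; ring

section Bregman

open InnerProductSpace

variable {E : Type*} [NormedAddCommGroup E] [InnerProductSpace ℝ E] [CompleteSpace E]
  {h : E → ℝ}

theorem ConvexOn.add_inner_gradient_le (hc : ConvexOn ℝ Set.univ h) {x : E}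
    (hx : DifferentiableAt ℝ h x) (y : E) : h x + ⟪gradient h x, y - x⟫ ≤ h y := by
  have hline : HasDerivAt (h ∘ (AffineMap.lineMap x y : ℝ →ᵃ[ℝ] E)) ⟪gradient h x, y - x⟫ 0 := by
    have := hx.hasGradientAt.hasFDerivAt.comp_hasDerivAt_of_eq (0 : ℝ)
      AffineMap.hasDerivAt_lineMap (AffineMap.lineMap_apply_zero x y).symm
    rwa [InnerProductSpace.toDual_apply_apply] at this
  have := (hc.comp_affineMap _).le_slope_of_hasDerivAt
    (Set.mem_univ 0) (Set.mem_univ 1) one_pos hline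
  simp only [slope_def_field, Function.comp_apply, AffineMap.lineMap_apply_one,
    AffineMap.lineMap_apply_zero, sub_zero, div_one] at this
  linarith

theorem breg_nonneg (hc : ConvexOn ℝ Set.univ h) {x : E} (hx : DifferentiableAt ℝ h x)
    (y : E) : 0 ≤ breg h y x := by
  have := hc.add_inner_gradient_le hx y
  unfold breg
  linarith

theorem breg_three_point (h : E → ℝ) (x x' z : E) :
    breg h z x - breg h z x' - breg h x' x = ⟪gradient h x' - gradient h x, z - x'⟫ := by
  simp only [breg, inner_sub_left, inner_sub_right]
  ring

theorem IsMinOn.inner_gradient_sub_breg_nonneg {Q : Set E} (hQ : Convex ℝ Q) {y p z : E}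
    (hp : p ∈ Q) (hz : z ∈ Q) (hd : DifferentiableAt ℝ h p)
    (hmin : IsMinOn (fun u => breg h u y) Q p) :
    0 ≤ ⟪gradient h p - gradient h y, z - p⟫ := by
  have hderiv : HasFDerivAt (fun u => breg h u y)
      (toDual ℝ E (gradient h p) - toDual ℝ E (gradient h y)) p := by
    have := (hd.hasGradientAt.hasFDerivAt.sub_const (h y)).sub
      ((toDual ℝ E (gradient h y)).hasFDerivAt.sub_const ⟪gradient h y, y⟫)
    refine this.congr_of_eventuallyEq (Filter.Eventually.of_forall fun u => ?_)
    simp [breg, inner_sub_right]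
  simpa only [sub_apply, toDual_apply_apply, ← inner_sub_left] using
    hmin.localize.hasFDerivWithinAt_nonneg hderiv.hasFDerivWithinAt
      (sub_mem_posTangentConeAt_of_segment_subset (hQ.segment_subset hp hz))

theorem MDStepV.mul_inner_sub_le {Q : Set E} (hQ : Convex ℝ Q) (hd : Differentiable ℝ h)
    {η : ℝ} {v x x' z : E} (hstep : MDStepV h Q η v x x') (hz : z ∈ Q) :
    η * ⟪v, x' - z⟫ ≤ breg h z x - breg h z x' - breg h x' x := by
  obtain ⟨y, hy, hx', hmin⟩ := hstep
  have hopt := hmin.inner_gradient_sub_breg_nonneg hQ hx' hz (hd x')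
  rw [hy, show gradient h x' - (gradient h x - η • v) = (gradient h x' - gradient h x) + η • v
    by abel, inner_add_left, ← breg_three_point, real_inner_smul_left] at hopt
  rw [← neg_sub z x', inner_neg_right]
  linarith

theorem regret_step_le {Q : Set E} (hQ : Convex ℝ Q) {f d : E → ℝ} (hd : Differentiable ℝ h)
    (hc : ConvexOn ℝ Set.univ h) {M μ Md A2 lam S₀ S : ℝ}
    (hfLip : RelLipschitz h Q M f) (hfSC : RelStrongConvex h Q μ f)
    (hdLip : RelLipschitz h Q Md d) (hdSC : RelStrongConvex h Q 1 d)
    {p p' z : E} (hp : p ∈ Q) (hz : z ∈ Q) (hdp : 0 ≤ d p) (hdz : d z ≤ A2)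
    (hlam : 0 ≤ lam) (hS : S = S₀ + μ + lam) (hSpos : 0 < S)
    (hstep : MDStepV h Q (1 / S) (gradient f p + lam • gradient d p) p p') :
    f p - f z ≤
      lam * A2 + (S₀ * breg h z p - S * breg h z p') + (M + lam * Md) ^ 2 / (2 * S) := by
  have hmirror := hstep.mul_inner_sub_le hQ hd hz
  obtain ⟨-, -, hp', -⟩ := hstep
  have hsplit (w : E) : ⟪w, p' - z⟫ = ⟪w, p' - p⟫ - ⟪w, z - p⟫ := by
    rw [← inner_sub_right, sub_sub_sub_cancel_right]
  rw [one_div, inv_mul_le_iff₀ hSpos, inner_add_left, real_inner_smul_left, hsplit,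
    hsplit] at hmirror
  have hfLip' := hfLip p hp p' hp'
  have hdLip' := mul_le_mul_of_nonneg_left (hdLip p hp p' hp') hlam
  have hfSC' := hfSC z hz p hp
  have hdSC' := mul_le_mul_of_nonneg_left (hdSC z hz p hp) hlam
  have hamgm := mul_sqrt_two_mul_le (M + lam * Md) hSpos (breg_nonneg hc (hd p) p')
  have hdz' := mul_le_mul_of_nonneg_left hdz hlam
  have hdp' := mul_nonneg hlam hdp
  subst hS
  linarith

end Bregman

theorem regularized_online_mirror_descent_regret_general
    {E : Type*} [NormedAddCommGroup E] [InnerProductSpace ℝ E] [FiniteDimensional ℝ E]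
    (Q : Set E) (hQconv : Convex ℝ Q)
    (h : E → ℝ) (hdiff : Differentiable ℝ h) (hconv : ConvexOn ℝ Set.univ h)
    (T : ℕ)
    (f : ℕ → E → ℝ)
    (M μ : ℕ → ℝ)
    (hfLip : ∀ t ∈ Finset.Icc 1 T, RelLipschitz h Q (M t) (f t))
    (hfSC : ∀ t ∈ Finset.Icc 1 T, RelStrongConvex h Q (μ t) (f t))
    (d : E → ℝ)
    (Md A2 : ℝ)
    (hdLip : RelLipschitz h Q Md d) (hdSC : RelStrongConvex h Q 1 d)
    (hdnn : ∀ z ∈ Q, 0 ≤ d z) (hA2 : IsLUB (d '' Q) A2)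
    (lam : ℕ → ℝ)
    (hlam : ∀ t ∈ Finset.Icc 1 T, lam t =
      (Real.sqrt (((∑ s ∈ Finset.Icc 1 t, μ s) + ∑ s ∈ Finset.Icc 1 (t - 1), lam s) ^ 2
          + 8 * (M t) ^ 2 / (A2 + 2 * Md ^ 2))
        - ((∑ s ∈ Finset.Icc 1 t, μ s) + ∑ s ∈ Finset.Icc 1 (t - 1), lam s)) / 2)
    (hpos : ∀ t ∈ Finset.Icc 1 T,
      0 < (∑ s ∈ Finset.Icc 1 t, μ s) + ∑ s ∈ Finset.Icc 1 t, lam s)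
    (x : ℕ → E) (hx1 : x 1 ∈ Q)
    (hstep : ∀ t ∈ Finset.Icc 1 T,
      MDStepV h Q (1 / ((∑ s ∈ Finset.Icc 1 t, μ s) + ∑ s ∈ Finset.Icc 1 t, lam s))
        (gradient (f t) (x t) + lam t • gradient d (x t)) (x t) (x (t + 1)))
    (xs : E) (hxsQ : xs ∈ Q) :
    ∑ t ∈ Finset.Icc 1 T, f t (x t) - ∑ t ∈ Finset.Icc 1 T, f t xs ≤
      (∑ s ∈ Finset.Icc 1 T, lam s) * A2 +
        ∑ t ∈ Finset.Icc 1 T, (M t + lam t * Md) ^ 2 /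
          ((∑ s ∈ Finset.Icc 1 t, μ s) + ∑ s ∈ Finset.Icc 1 t, lam s) := by
  set S : ℕ → ℝ := fun n => (∑ s ∈ Icc 1 n, μ s) + ∑ s ∈ Icc 1 n, lam s
  set G : ℕ → ℝ := fun n => S n * breg h xs (x (n + 1))
  have hd_le_A2 : ∀ z ∈ Q, d z ≤ A2 := fun z hz => hA2.1 ⟨z, hz, rfl⟩
  have hA2_nonneg : 0 ≤ A2 := (hdnn xs hxsQ).trans (hd_le_A2 xs hxsQ)
  have hlam_nonneg : ∀ t ∈ Icc 1 T, 0 ≤ lam t := fun t ht => by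
    rw [hlam t ht]
    exact half_sqrt_sq_add_sub_nonneg _ (by positivity)
  have hxQ : ∀ t ∈ Icc 1 T, x t ∈ Q := by
    rintro (_ | _ | k) ht
    · simp at ht
    · exact hx1
    · obtain ⟨-, -, hk, -⟩ := hstep (k + 1) (by rw [mem_Icc] at ht ⊢; omega)
      exact hk
  have hround : ∀ t ∈ Icc 1 T, f t (x t) - f t xs ≤
      lam t * A2 + (G (t - 1) - G t) + (M t + lam t * Md) ^ 2 / (2 * S t) := by
    intro t ht
    obtain ⟨k, rfl⟩ : ∃ k, t = k + 1 := ⟨t - 1, by rw [mem_Icc] at ht; omega⟩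
    rw [Nat.add_sub_cancel]
    exact regret_step_le hQconv hdiff hconv (hfLip _ ht) (hfSC _ ht) hdLip hdSC (hxQ _ ht)
      hxsQ (hdnn _ (hxQ _ ht)) (hd_le_A2 xs hxsQ) (hlam_nonneg _ ht)
      (by simp only [S, sum_Icc_succ_top (Nat.le_add_left 1 k)]; ring) (hpos _ ht) (hstep _ ht)
  have hG0 : G 0 = 0 := by simp [G, S]
  have hGT : 0 ≤ G T := by
    refine mul_nonneg ?_ (breg_nonneg hconv (hdiff _) _)
    rcases T.eq_zero_or_pos with rfl | hT
    · simp [S]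
    · exact (hpos T (mem_Icc.2 ⟨hT, le_rfl⟩)).le
  have hhalf : ∑ t ∈ Icc 1 T, (M t + lam t * Md) ^ 2 / (2 * S t) ≤
      ∑ t ∈ Icc 1 T, (M t + lam t * Md) ^ 2 / S t := by
    refine sum_le_sum fun t ht => div_le_div_of_nonneg_left (sq_nonneg _) (hpos t ht) ?_
    linarith [hpos t ht]
  calc _ = ∑ t ∈ Icc 1 T, (f t (x t) - f t xs) := (sum_sub_distrib ..).symm
    _ ≤ ∑ t ∈ Icc 1 T,
        (lam t * A2 + (G (t - 1) - G t) + (M t + lam t * Md) ^ 2 / (2 * S t)) :=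
      sum_le_sum hround
    _ = (∑ t ∈ Icc 1 T, lam t) * A2 + (G 0 - G T) +
        ∑ t ∈ Icc 1 T, (M t + lam t * Md) ^ 2 / (2 * S t) := by
      rw [sum_add_distrib, sum_add_distrib, sum_mul, sum_Icc_pred_sub]
    _ ≤ _ := by linarith

/-- Theorem 3 (Adaptive General-Norm Online Gradient Descent with Regularization):
with `λ_t = ½·(√((μ_{1:t} + λ_{1:t−1})² + 8·M_t²/(A² + 2·M_d²)) − (μ_{1:t} + λ_{1:t−1}))`
and step sizes `η_{t+1} = 1/(μ_{1:t} + λ_{1:t})`,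
`Regret_T ≤ λ_{1:T}·A² + Σ_{t=1}^T (M_t + λ_t·M_d)²/(μ_{1:t} + λ_{1:t})`. -/
theorem regularized_online_mirror_descent_regret
    {E : Type*} [NormedAddCommGroup E] [InnerProductSpace ℝ E] [FiniteDimensional ℝ E]
    (Q : Set E) (hQne : Q.Nonempty) (hQclosed : IsClosed Q) (hQconv : Convex ℝ Q)
    (h : E → ℝ) (hdiff : Differentiable ℝ h) (hconv : ConvexOn ℝ Set.univ h)
    (T : ℕ) (hT : 0 < T)
    (f : ℕ → E → ℝ) (hfdiff : ∀ t, Differentiable ℝ (f t))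
    (hfconv : ∀ t, ConvexOn ℝ Set.univ (f t))
    (M μ : ℕ → ℝ)
    (hMnn : ∀ t ∈ Finset.Icc 1 T, 0 ≤ M t)
    (hfLip : ∀ t ∈ Finset.Icc 1 T, RelLipschitz h Q (M t) (f t))
    (hfSC : ∀ t ∈ Finset.Icc 1 T, RelStrongConvex h Q (μ t) (f t))
    (d : E → ℝ) (hddiff : Differentiable ℝ d) (hdconv : ConvexOn ℝ Set.univ d)
    (Md A2 : ℝ)
    (hdLip : RelLipschitz h Q Md d) (hdSC : RelStrongConvex h Q 1 d)
    (hdnn : ∀ z ∈ Q, 0 ≤ d z) (hA2 : IsLUB (d '' Q) A2)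
    (lam : ℕ → ℝ)
    (hlam : ∀ t ∈ Finset.Icc 1 T, lam t =
      (Real.sqrt (((∑ s ∈ Finset.Icc 1 t, μ s) + ∑ s ∈ Finset.Icc 1 (t - 1), lam s) ^ 2
          + 8 * (M t) ^ 2 / (A2 + 2 * Md ^ 2))
        - ((∑ s ∈ Finset.Icc 1 t, μ s) + ∑ s ∈ Finset.Icc 1 (t - 1), lam s)) / 2)
    (hpos : ∀ t ∈ Finset.Icc 1 T,
      0 < (∑ s ∈ Finset.Icc 1 t, μ s) + ∑ s ∈ Finset.Icc 1 t, lam s)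
    (x : ℕ → E) (hx1 : x 1 ∈ Q)
    (hstep : ∀ t ∈ Finset.Icc 1 T,
      MDStepV h Q (1 / ((∑ s ∈ Finset.Icc 1 t, μ s) + ∑ s ∈ Finset.Icc 1 t, lam s))
        (gradient (f t) (x t) + lam t • gradient d (x t)) (x t) (x (t + 1)))
    (xs : E) (hxsQ : xs ∈ Q)
    (hxsmin : ∀ y ∈ Q, ∑ t ∈ Finset.Icc 1 T, f t xs ≤ ∑ t ∈ Finset.Icc 1 T, f t y) :
    ∑ t ∈ Finset.Icc 1 T, f t (x t) - ∑ t ∈ Finset.Icc 1 T, f t xs ≤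
      (∑ s ∈ Finset.Icc 1 T, lam s) * A2 +
        ∑ t ∈ Finset.Icc 1 T, (M t + lam t * Md) ^ 2 /
          ((∑ s ∈ Finset.Icc 1 t, μ s) + ∑ s ∈ Finset.Icc 1 t, lam s) :=
  regularized_online_mirror_descent_regret_general Q hQconv h hdiff hconv T f M μ hfLip hfSC d Md A2
    hdLip hdSC hdnn hA2 lam hlam hpos x hx1 hstep xs hxsQ
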